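/- Let m ≥ 1 and let ∞ > s₁ ≥ s₂ ≥ ⋯ ≥ s_m ≥ 0 be real numbers. Then ∏_{k=1}^{m} s_k e^{−s_k²/2} · ∏_{1≤j<k≤m} (s_j² − s_k²) · [ ∫_{s₁}^{∞} dt₁ ∫_{s₂}^{s₁} dt₂ ⋯ ∫_{s_m}^{s_{m−1}} dt_m ∫_{0}^{s_m} dt_{m+1} ∏_{k=1}^{m+1} e^{−t_k²/2} · ∏_{1≤j<k≤m+1} (t_j² − t_k²) ] = √(π/2) · ∏_{k=1}^{m} s_k² e^{−s_k²} · ∏_{1≤j<k≤m} (s_j² − s_k²)². -/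

import Mathlib

/-!
Up to the sign `(-1)^(m+1 choose 2)`, the integrand is the determinant `det [t_i^(2k) e^(-t_i²/2)]`,
and the interlacing region is a product of intervals, so by multilinearity the integral is the
determinant of the one-dimensional integrals. Each of these is a difference of Gaussian tails
`G_(2k)(x) = ∫_x^∞ t^(2k) e^(-t²/2) dt` at consecutive endpoints; telescoping the rows leaves
`det [G_(2k)(a_i)]` with `a = (s₁, …, s_m, 0)`. Integration by parts,
`G_(2k+2)(x) = x^(2k+1) e^(-x²/2) + (2k+1) G_(2k)(x)`, reduces the columns to `G_0` and
`x^(2k+1) e^(-x²/2)`. The last row is then `(√(π/2), 0, …, 0)`, and the remaining minor is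
`∏ s_i e^(-s_i²/2)` times a Vandermonde determinant in the `s_i²`.
-/

open MeasureTheory Set Matrix Real

section Determinants

open Finset

theorem prod_prod_Iio_sub_eq_neg_one_pow_mul_det_vandermonde {R : Type*} [CommRing R] {n : ℕ}
    (x : Fin n → R) :
    ∏ k, ∏ j ∈ Iio k, (x j - x k) = (-1) ^ n.choose 2 * det (vandermonde x) := by
  have hsum : ∑ k : Fin n, (k : ℕ) = n.choose 2 := by
    rw [Fin.sum_univ_eq_sum_range (fun k => k), sum_range_id, Nat.choose_two_right]
  calc ∏ k, ∏ j ∈ Iio k, (x j - x k)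
      = ∏ k : Fin n, (-1) ^ (k : ℕ) * ∏ j ∈ Iio k, (x k - x j) := by
        refine prod_congr rfl fun k _ => ?_
        rw [← Fin.card_Iio, ← prod_const, ← prod_mul_distrib]
        simp only [neg_one_mul, neg_sub]
    _ = (-1) ^ n.choose 2 * ∏ j, ∏ k ∈ Ioi j, (x k - x j) := by
        rw [prod_mul_distrib, prod_pow_eq_pow_sum, hsum,
          prod_comm' (s' := fun j => Ioi j) (t' := univ) fun k j => by
            simp only [Finset.mem_Iio, Finset.mem_Ioi, Finset.mem_univ, and_true, true_and]]
    _ = (-1) ^ n.choose 2 * det (vandermonde x) := by rw [det_vandermonde]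

theorem neg_one_pow_choose_two_succ_mul (n : ℕ) :
    (-1 : ℝ) ^ (n + 1).choose 2 * (-1) ^ n = (-1) ^ n.choose 2 := by
  rw [Nat.choose_two_right, Nat.choose_two_right, Nat.triangle_succ, pow_add, mul_assoc,
    ← pow_add, Even.neg_one_pow ⟨n, rfl⟩, mul_one]

theorem prod_Icc_one_eq_prod_fin {M : Type*} [CommMonoid M] (f : ℕ → M) (m : ℕ) :
    ∏ k ∈ Icc 1 m, f k = ∏ i : Fin m, f (i + 1) := by
  rw [Fin.prod_univ_eq_prod_range (fun i => f (i + 1)), range_eq_Ico, prod_Ico_add' f]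
  rfl

theorem prod_Icc_prod_Ico_one_eq_prod_fin {M : Type*} [CommMonoid M] (F : ℕ → ℕ → M) (m : ℕ) :
    ∏ k ∈ Icc 1 m, ∏ j ∈ Ico 1 k, F j k = ∏ k : Fin m, ∏ j ∈ Iio k, F (j + 1) (k + 1) := by
  rw [prod_Icc_one_eq_prod_fin]
  refine prod_congr rfl fun k _ => ?_
  have h := prod_map (Iio k) Fin.valEmbedding fun j => F (j + 1) (k + 1)
  rw [Fin.map_valEmbedding_Iio, Nat.Iio_eq_range, range_eq_Ico,
    prod_Ico_add' (fun j => F j (k + 1))] at h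
  exact h

end Determinants

section Integrals

theorem setIntegral_univ_pi_det {ι α 𝕜 : Type*} [Fintype ι] [DecidableEq ι] [RCLike 𝕜]
    [MeasurableSpace α] {μ : Measure α} [SigmaFinite μ] (S : ι → Set α) (f : ι → α → 𝕜)
    (hf : ∀ i k, IntegrableOn (f k) (S i) μ) :
    ∫ t in univ.pi S, det (of fun i k => f k (t i)) ∂Measure.pi (fun _ => μ) =
      det (of fun i k => ∫ x in S i, f k x ∂μ) := by
  rw [Measure.restrict_pi_pi, ← det_transpose, det_apply]
  simp_rw [← det_transpose (of fun i k => f k _), det_apply, Units.smul_def, zsmul_eq_mul,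
    transpose_apply, of_apply]
  rw [integral_finsetSum _ fun (σ : Equiv.Perm ι) _ =>
    (Integrable.fintype_prod fun i => (hf i (σ i) : Integrable _ _)).const_mul _]
  refine Finset.sum_congr rfl fun σ _ => ?_
  rw [integral_const_mul, integral_fintype_prod_eq_prod]

theorem setIntegral_Ioo_eq_sub {E : Type*} [NormedAddCommGroup E] [NormedSpace ℝ E]
    {f : ℝ → E} {a b : ℝ} (hf : IntegrableOn f (Ioi a)) (hab : a ≤ b) :
    ∫ x in Ioo a b, f x = (∫ x in Ioi a, f x) - ∫ x in Ioi b, f x := by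
  rw [intervalIntegral.integral_Ioi_sub_Ioi hf hab, intervalIntegral.integral_of_le hab,
    integral_Ioc_eq_integral_Ioo]

def interlacingChamber {n : ℕ} (a : Fin (n + 1) → ℝ) : Set (Fin (n + 1) → ℝ) :=
  univ.pi (Fin.cons (Ioi (a 0)) fun i : Fin n => Ioo (a i.succ) (a i.castSucc))

theorem mem_interlacingChamber {n : ℕ} {a t : Fin (n + 1) → ℝ} :
    t ∈ interlacingChamber a ↔
      a 0 < t 0 ∧ ∀ i : Fin n, t i.succ ∈ Ioo (a i.succ) (a i.castSucc) := by
  simp only [interlacingChamber, mem_univ_pi, Fin.forall_fin_succ, Fin.cons_zero, Fin.cons_succ,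
    mem_Ioi]

theorem setIntegral_interlacingChamber_det {𝕜 : Type*} [RCLike 𝕜] {n : ℕ}
    (a : Fin (n + 1) → ℝ) (ha : ∀ i : Fin n, a i.succ ≤ a i.castSucc) (f : Fin (n + 1) → ℝ → 𝕜)
    (hf : ∀ k, Integrable (f k)) :
    ∫ t in interlacingChamber a, det (of fun i k => f k (t i)) =
      det (of fun i k => ∫ x in Ioi (a i), f k x) := by
  rw [interlacingChamber, volume_pi, setIntegral_univ_pi_det _ _ fun _ k => (hf k).integrableOn]
  refine (det_eq_of_forall_row_eq_smul_add_pred (fun _ => 1) (fun k => ?_) fun i k => ?_).symm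
  · simp only [of_apply, Fin.cons_zero]
  · simp only [of_apply, Fin.cons_succ, one_mul]
    rw [setIntegral_Ioo_eq_sub (hf k).integrableOn (ha i), sub_add_cancel]

end Integrals

section Gaussian

noncomputable def gaussMonomial (n : ℕ) (t : ℝ) : ℝ := t ^ n * exp (-t ^ 2 / 2)

noncomputable def gaussTail (n : ℕ) (x : ℝ) : ℝ := ∫ t in Ioi x, gaussMonomial n t

theorem integrable_gaussMonomial (n : ℕ) : Integrable (gaussMonomial n) := by
  have h := integrable_rpow_mul_exp_neg_mul_sq (b := 1 / 2) (by norm_num) (s := n)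
    (by linarith [n.cast_nonneg (α := ℝ)])
  refine h.congr (.of_forall fun t => ?_)
  simp only [gaussMonomial, rpow_natCast]
  ring_nf

theorem gaussTail_zero_zero : gaussTail 0 0 = √(π / 2) := by
  have h : ∀ t : ℝ, gaussMonomial 0 t = exp (-(1 / 2) * t ^ 2) := fun t => by
    rw [gaussMonomial, pow_zero, one_mul]; ring_nf
  rw [gaussTail, funext h, integral_gaussian_Ioi, show π / (1 / 2) = 2 ^ 2 * (π / 2) by ring,
    sqrt_mul (by positivity), sqrt_sq zero_le_two]
  ring

theorem hasDerivAt_gaussMonomial_succ (n : ℕ) (t : ℝ) :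
    HasDerivAt (gaussMonomial (n + 1))
      ((n + 1) * gaussMonomial n t - gaussMonomial (n + 2) t) t := by
  refine ((hasDerivAt_pow (n + 1) t).fun_mul
    (((hasDerivAt_pow 2 t).fun_neg.div_const 2).exp)).congr_deriv ?_
  simp only [gaussMonomial, Nat.add_sub_cancel]
  push_cast
  ring

theorem gaussTail_add_two (n : ℕ) (x : ℝ) :
    gaussTail (n + 2) x = gaussMonomial (n + 1) x + (n + 1) * gaussTail n x := by
  have hderiv := fun t (_ : t ∈ Ici x) => hasDerivAt_gaussMonomial_succ n t
  have hint₁ := (integrable_gaussMonomial n).const_mul (n + 1 : ℝ)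
  have hint₂ := integrable_gaussMonomial (n + 2)
  have hlim := tendsto_zero_of_hasDerivAt_of_integrableOn_Ioi
    (fun t ht => hderiv t (mem_Ici_of_Ioi ht)) (hint₁.sub hint₂).integrableOn
    (integrable_gaussMonomial (n + 1)).integrableOn
  have h := integral_Ioi_of_hasDerivAt_of_tendsto' hderiv (hint₁.sub hint₂).integrableOn hlim
  rw [integral_sub hint₁.integrableOn hint₂.integrableOn, integral_const_mul] at h
  rw [gaussTail, gaussTail]
  linarith

theorem det_gaussMonomial_two_mul_add {n : ℕ} (r : ℕ) (y : Fin n → ℝ) :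
    det (of fun i k : Fin n => gaussMonomial (2 * k + r) (y i)) =
      (∏ i, gaussMonomial r (y i)) * det (vandermonde fun i => y i ^ 2) := by
  rw [← det_mul_column]
  congr 1
  ext i k
  simp only [of_apply, vandermonde_apply, gaussMonomial]
  ring

theorem prod_exp_mul_prod_prod_Iio_sq_sub_eq_det {n : ℕ} (t : Fin n → ℝ) :
    (∏ k, exp (-(t k) ^ 2 / 2)) * ∏ k, ∏ j ∈ Finset.Iio k, ((t j) ^ 2 - (t k) ^ 2) =
      (-1) ^ n.choose 2 * det (of fun i k : Fin n => gaussMonomial (2 * k) (t i)) := by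
  have h := det_gaussMonomial_two_mul_add 0 t
  simp only [add_zero] at h
  rw [prod_prod_Iio_sub_eq_neg_one_pow_mul_det_vandermonde fun i => t i ^ 2, h]
  simp only [gaussMonomial, pow_zero, one_mul]
  ring

theorem det_gaussTail_two_mul {n : ℕ} (x : Fin (n + 1) → ℝ) :
    det (of fun i k : Fin (n + 1) => gaussTail (2 * k) (x i)) =
      det (of fun i => Fin.cons (gaussTail 0 (x i))
        fun k : Fin n => gaussMonomial (2 * k + 1) (x i)) := by
  refine det_eq_of_forall_col_eq_smul_add_pred (fun k => 2 * k + 1) (fun i => ?_) fun i k => ?_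
  · simp only [of_apply, Fin.cons_zero, Fin.val_zero, mul_zero]
  · simp only [of_apply, Fin.cons_succ, Fin.val_succ, Fin.val_castSucc]
    rw [mul_add_one, gaussTail_add_two]
    push_cast
    ring

theorem det_gaussTail_cons_of_last_eq_zero {n : ℕ} (x : Fin (n + 1) → ℝ)
    (hx : x (Fin.last n) = 0) :
    det (of fun i => Fin.cons (gaussTail 0 (x i))
        fun k : Fin n => gaussMonomial (2 * k + 1) (x i)) =
      (-1) ^ n * √(π / 2) *
        det (of fun i k : Fin n => gaussMonomial (2 * k + 1) (x i.castSucc)) := by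
  rw [det_succ_row _ (Fin.last n), Finset.sum_eq_single 0]
  · simp only [of_apply, Fin.cons_zero, hx, gaussTail_zero_zero, Fin.val_last, Fin.val_zero,
      add_zero, submatrix, Fin.succAbove_last, Fin.zero_succAbove, Fin.cons_succ]
  · intro k _ hk
    obtain ⟨k, rfl⟩ := Fin.exists_succ_eq.2 hk
    simp [gaussMonomial, hx]
  · simp

theorem setIntegral_interlacingChamber_gaussDensity {n : ℕ} (a : Fin (n + 1) → ℝ)
    (ha : ∀ i : Fin n, a i.succ ≤ a i.castSucc) (hlast : a (Fin.last n) = 0) :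
    ∫ t in interlacingChamber a,
        (∏ k, exp (-(t k) ^ 2 / 2)) * ∏ k, ∏ j ∈ Finset.Iio k, ((t j) ^ 2 - (t k) ^ 2) =
      √(π / 2) * (∏ i : Fin n, gaussMonomial 1 (a i.castSucc)) *
        ∏ k : Fin n, ∏ j ∈ Finset.Iio k, ((a j.castSucc) ^ 2 - (a k.castSucc) ^ 2) := by
  simp_rw [prod_exp_mul_prod_prod_Iio_sq_sub_eq_det]
  rw [integral_const_mul, setIntegral_interlacingChamber_det a ha _
    fun k => integrable_gaussMonomial _]
  simp only [← gaussTail.eq_1]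
  rw [det_gaussTail_two_mul, det_gaussTail_cons_of_last_eq_zero a hlast,
    det_gaussMonomial_two_mul_add 1, prod_prod_Iio_sub_eq_neg_one_pow_mul_det_vandermonde,
    ← neg_one_pow_choose_two_succ_mul n]
  ring

end Gaussian

theorem gauss_odd_decimation_density_general (m : ℕ) (s : ℕ → ℝ)
    (hdec : ∀ i, 1 ≤ i → i < m → s (i + 1) ≤ s i) (hsm : 0 ≤ s m) :
    (∏ k ∈ Finset.Icc 1 m, s k * Real.exp (-(s k) ^ 2 / 2)) *
      (∏ k ∈ Finset.Icc 1 m, ∏ j ∈ Finset.Ico 1 k, ((s j) ^ 2 - (s k) ^ 2)) *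
      (∫ t in {t : Fin (m + 1) → ℝ | ∀ i : Fin (m + 1),
          (if (i : ℕ) < m then s ((i : ℕ) + 1) else 0) < t i ∧
            (0 < (i : ℕ) → t i < s (i : ℕ))},
        (∏ k : Fin (m + 1), Real.exp (-(t k) ^ 2 / 2)) *
          ∏ k : Fin (m + 1), ∏ j ∈ Finset.Iio k, ((t j) ^ 2 - (t k) ^ 2)) =
    Real.sqrt (Real.pi / 2) *
      (∏ k ∈ Finset.Icc 1 m, (s k) ^ 2 * Real.exp (-(s k) ^ 2)) *
      ∏ k ∈ Finset.Icc 1 m, ∏ j ∈ Finset.Ico 1 k, ((s j) ^ 2 - (s k) ^ 2) ^ 2 := by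
  let a : Fin (m + 1) → ℝ := fun i => if (i : ℕ) < m then s (i + 1) else 0
  have ha_castSucc (i : Fin m) : a i.castSucc = s (i + 1) := if_pos i.isLt
  have ha (i : Fin m) : a i.succ ≤ a i.castSucc := by
    rw [ha_castSucc]
    by_cases hi : (i : ℕ) + 1 < m
    · simpa [a, hi] using hdec (i + 1) le_add_self hi
    · simpa [a, hi, show (i : ℕ) + 1 = m by omega] using hsm
  have hchamber : {t : Fin (m + 1) → ℝ | ∀ i : Fin (m + 1),
      (if (i : ℕ) < m then s ((i : ℕ) + 1) else 0) < t i ∧ (0 < (i : ℕ) → t i < s (i : ℕ))} =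
      interlacingChamber a := by
    ext t
    rw [mem_interlacingChamber, Set.mem_ofPred_eq, Fin.forall_fin_succ]
    simp only [Fin.val_succ, ← ha_castSucc]
    simp [a]
  have hsq (x : ℝ) : x ^ 2 * exp (-x ^ 2) = (x * exp (-x ^ 2 / 2)) ^ 2 := by
    rw [mul_pow, ← exp_nat_mul]; ring_nf
  rw [hchamber, setIntegral_interlacingChamber_gaussDensity a ha (if_neg (lt_irrefl m)),
    prod_Icc_prod_Ico_one_eq_prod_fin, prod_Icc_prod_Ico_one_eq_prod_fin,
    prod_Icc_one_eq_prod_fin, prod_Icc_one_eq_prod_fin]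
  simp only [ha_castSucc, hsq, Finset.prod_pow, gaussMonomial, pow_one]
  ring

/-- Gauss case of Theorem 1.1, odd order `n = 2m+1`, at the level of densities:
multiplying the even-indexed factor by the integral of the odd-indexed factor over the
interlacing region gives `√(π/2) ∏ s_k² e^{-s_k²} Δ(s²)²`. -/
theorem gauss_odd_decimation_density (m : ℕ) (hm : 1 ≤ m) (s : ℕ → ℝ)
    (hdec : ∀ i, 1 ≤ i → i < m → s (i + 1) ≤ s i) (hsm : 0 ≤ s m) :
    (∏ k ∈ Finset.Icc 1 m, s k * Real.exp (-(s k) ^ 2 / 2)) *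
      (∏ k ∈ Finset.Icc 1 m, ∏ j ∈ Finset.Ico 1 k, ((s j) ^ 2 - (s k) ^ 2)) *
      (∫ t in {t : Fin (m + 1) → ℝ | ∀ i : Fin (m + 1),
          (if (i : ℕ) < m then s ((i : ℕ) + 1) else 0) < t i ∧
            (0 < (i : ℕ) → t i < s (i : ℕ))},
        (∏ k : Fin (m + 1), Real.exp (-(t k) ^ 2 / 2)) *
          ∏ k : Fin (m + 1), ∏ j ∈ Finset.Iio k, ((t j) ^ 2 - (t k) ^ 2)) =
    Real.sqrt (Real.pi / 2) *
      (∏ k ∈ Finset.Icc 1 m, (s k) ^ 2 * Real.exp (-(s k) ^ 2)) *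
      ∏ k ∈ Finset.Icc 1 m, ∏ j ∈ Finset.Ico 1 k, ((s j) ^ 2 - (s k) ^ 2) ^ 2 :=
  gauss_odd_decimation_density_general m s hdec hsm
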